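/- arXiv:2210.13158 — 3 statements merged into one kernel-verified Lean document; each statement's English description precedes it below -/
import Mathlib

section
/- If g(z) = z + b_2 z^2 + b_3 z^3 + ... is analytic on the unit disk and starlike (i.e., Re(z g'(z)/g(z)) > 0 for all z in the unit disk), then |b_2^2 - b_3^2| ≤ 13, and this bound is sharp. -/
/-!
Write `g(z) = z h(z)` and `p = g' / h`, the analytic extension of `z g'(z) / g(z)` across `0`.
Starlikeness says `Re p ≥ 0` with `p(0) = 1`, so Carathéodory's lemma bounds every Taylor
coefficient of `p` by `2`: on the circle `|z| = r` the function `2 Re p` has `n`-th Fourier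
coefficient `p_n r^n`, while its mean is `2`. Comparing coefficients in `z g' = p g` gives
`b₂ = p₁` and `2 b₃ = p₁ b₂ + p₂`, hence `|b₂| ≤ 2`, `|b₃| ≤ 3` and
`|b₂² - b₃²| ≤ 4 + 9 = 13`. Equality holds for the rotated Koebe function `z / (1 - i z)²`,
whose coefficients are `bₙ = n iⁿ⁻¹`.
-/

open Complex Metric Set Filter Topology Real
open scoped Nat NNReal ComplexConjugate

theorem norm_circleAverage_le {E : Type*} [NormedAddCommGroup E] [NormedSpace ℝ E]
    {f : ℂ → E} {c : ℂ} {R : ℝ} :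
    ‖circleAverage f c R‖ ≤ circleAverage (fun z => ‖f z‖) c R := by
  rw [circleAverage, circleAverage, norm_smul, smul_eq_mul, Real.norm_of_nonneg (by positivity)]
  gcongr
  exact intervalIntegral.norm_integral_le_integral_norm two_pi_pos.le

section Caratheodory

variable {f : ℂ → ℂ} {r : ℝ}

theorem circleAverage_inv_pow_mul (hf : DiffContOnCl ℂ f (ball 0 r)) (hr : 0 < r) (n : ℕ) :
    circleAverage (fun z => z⁻¹ ^ n * f z) 0 r = iteratedDeriv n f 0 / n ! := by
  have hcauchy := circleIntegral_one_div_sub_center_pow_smul_of_differentiable_on_off_countable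
    hr n countable_empty (closure_ball (0 : ℂ) hr.ne' ▸ hf.continuousOn)
    fun z hz => hf.differentiableAt isOpen_ball hz.1
  rw [circleAverage_eq_circleIntegral hr.ne']
  simp only [sub_zero, smul_eq_mul] at hcauchy ⊢
  have hpow : ∀ z : ℂ, z⁻¹ * (z⁻¹ ^ n * f z) = 1 / z ^ (n + 1) * f z := fun z => by
    rw [one_div, ← mul_assoc, ← inv_pow, ← pow_succ']
  simp only [hpow, hcauchy]
  field_simp

theorem circleAverage_pow_mul_eq_zero (hf : DiffContOnCl ℂ f (ball 0 r)) (hr : 0 < r) {n : ℕ}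
    (hn : n ≠ 0) : circleAverage (fun z => z ^ n * f z) 0 r = 0 := by
  have hf' : DiffContOnCl ℂ (fun z => z ^ n * f z) (ball 0 |r|) := by
    rw [abs_of_pos hr]
    exact (differentiable_pow n).diffContOnCl.smul hf
  rw [hf'.circleAverage, zero_pow hn, zero_mul]

theorem circleAverage_inv_pow_mul_two_re (hf : DiffContOnCl ℂ f (ball 0 r)) (hr : 0 < r) {n : ℕ}
    (hn : n ≠ 0) :
    circleAverage (fun z => z⁻¹ ^ n * (2 * (f z).re : ℂ)) 0 r = iteratedDeriv n f 0 / n ! := by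
  have hcont : ContinuousOn f (sphere 0 r) :=
    hf.continuousOn_ball.mono sphere_subset_closedBall
  have hinv : ContinuousOn (fun z : ℂ => z⁻¹ ^ n) (sphere 0 r) :=
    (continuousOn_inv₀.mono fun z hz => ne_zero_of_mem_sphere hr.ne' ⟨z, hz⟩).pow n
  -- on the circle `conj z = r² / z`, so the conjugate part is an average of `z ^ n f`, which is `0`
  have hsplit : EqOn (fun z => z⁻¹ ^ n * (2 * (f z).re : ℂ))
      (fun z => z⁻¹ ^ n * f z + ((r ^ (2 * n))⁻¹ : ℝ) • conj (z ^ n * f z)) (sphere 0 |r|) := by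
    intro z hz
    rw [abs_of_pos hr, mem_sphere_zero_iff_norm] at hz
    have hz0 : z ≠ 0 := by rintro rfl; simp [hr.ne] at hz
    have hr0 : (r : ℂ) ≠ 0 := by exact_mod_cast hr.ne'
    have hconj : conj z = (r ^ 2 : ℝ) * z⁻¹ := by
      rw [eq_mul_inv_iff_mul_eq₀ hz0, mul_comm, mul_conj', hz]
      push_cast; rfl
    simp only [map_mul, map_pow, hconj, Complex.real_smul, re_eq_add_conj]
    push_cast
    field_simp
    ring
  have hconjAvg : circleAverage (fun z => conj (z ^ n * f z)) 0 r
      = conj (circleAverage (fun z => z ^ n * f z) 0 r) :=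
    conjCLE.toContinuousLinearMap.circleAverage_comp_comm
      ((continuousOn_pow n |>.mul hcont).circleIntegrable hr.le)
  rw [circleAverage_congr_sphere hsplit, circleAverage_fun_add, circleAverage_fun_smul, hconjAvg,
    circleAverage_pow_mul_eq_zero hf hr hn, map_zero, smul_zero, add_zero,
    circleAverage_inv_pow_mul hf hr]
  · exact (hinv.mul hcont).circleIntegrable hr.le
  · exact ContinuousOn.circleIntegrable hr.le (by fun_prop)

theorem norm_iteratedDeriv_div_factorial_mul_pow_le (hf : DiffContOnCl ℂ f (ball 0 r))
    (hr : 0 < r) (hre : ∀ z ∈ sphere (0 : ℂ) r, 0 ≤ (f z).re) {n : ℕ} (hn : n ≠ 0) :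
    ‖iteratedDeriv n f 0 / (n !)‖ * r ^ n ≤ 2 * (f 0).re := by
  have hreAvg : circleAverage (fun z => (f z).re) 0 r = (f 0).re := by
    have hf' : DiffContOnCl ℂ f (ball 0 |r|) := by rwa [abs_of_pos hr]
    simpa [hf'.circleAverage, Function.comp_def] using reCLM.circleAverage_comp_comm
      ((hf.continuousOn_ball.mono sphere_subset_closedBall).circleIntegrable hr.le)
  have hnorm : EqOn (fun z => r ^ n • ‖z⁻¹ ^ n * (2 * (f z).re : ℂ)‖)
      (fun z => (2 : ℝ) • (f z).re) (sphere 0 |r|) := by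
    intro z hz
    rw [abs_of_pos hr] at hz
    have hz' : ‖z‖ = r := mem_sphere_zero_iff_norm.mp hz
    simp only [smul_eq_mul, norm_mul, norm_pow, norm_inv, hz', Complex.norm_ofNat, norm_real,
      Real.norm_of_nonneg (hre z hz), inv_pow]
    field_simp [hr.ne']
  calc ‖iteratedDeriv n f 0 / (n !)‖ * r ^ n
      ≤ circleAverage (fun z => ‖z⁻¹ ^ n * (2 * (f z).re : ℂ)‖) 0 r * r ^ n := by
        rw [← circleAverage_inv_pow_mul_two_re hf hr hn]
        gcongr
        exact norm_circleAverage_le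
    _ = 2 * (f 0).re := by
        rw [mul_comm, ← smul_eq_mul, ← circleAverage_fun_smul, circleAverage_congr_sphere hnorm,
          circleAverage_fun_smul, hreAvg, smul_eq_mul]

theorem norm_iteratedDeriv_div_factorial_mul_pow_le_of_re_nonneg {R : ℝ}
    (hf : DifferentiableOn ℂ f (ball 0 R)) (hR : 0 < R)
    (hre : ∀ z ∈ ball (0 : ℂ) R, 0 ≤ (f z).re) {n : ℕ} (hn : n ≠ 0) :
    ‖iteratedDeriv n f 0 / (n !)‖ * R ^ n ≤ 2 * (f 0).re := by
  have hbound : ∀ r ∈ Ioo 0 R, ‖iteratedDeriv n f 0 / (n !)‖ * r ^ n ≤ 2 * (f 0).re :=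
    fun r hr => norm_iteratedDeriv_div_factorial_mul_pow_le
      (hf.diffContOnCl_ball (closedBall_subset_ball hr.2)) hr.1
      (fun z hz => hre z (sphere_subset_closedBall.trans (closedBall_subset_ball hr.2) hz)) hn
  have hlim : Tendsto (fun r => ‖iteratedDeriv n f 0 / (n !)‖ * r ^ n) (𝓝[<] R)
      (𝓝 (‖iteratedDeriv n f 0 / (n !)‖ * R ^ n)) :=
    ((continuous_pow n).const_mul _).continuousWithinAt
  exact le_of_tendsto hlim (mem_of_superset (Ioo_mem_nhdsLT hR) hbound)

end Caratheodory

theorem hasFPowerSeriesOnBall_ofScalars_of_hasSum {c : ℕ → ℂ} {f : ℂ → ℂ} {R : ℝ≥0}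
    (hR : 0 < R) (hf : ∀ z ∈ ball (0 : ℂ) R, HasSum (fun n => c n * z ^ n) (f z)) :
    HasFPowerSeriesOnBall f (FormalMultilinearSeries.ofScalars ℂ c) 0 R where
  r_le := ENNReal.le_of_forall_nnreal_lt fun r hr => by
    have hmem : (r : ℂ) ∈ ball (0 : ℂ) R := by simpa using hr
    refine FormalMultilinearSeries.le_radius_of_tendsto _ (l := 0) ?_
    simpa [FormalMultilinearSeries.ofScalars_norm, norm_mul] using
      (hf _ hmem).summable.tendsto_atTop_zero.norm
  r_pos := by exact_mod_cast hR
  hasSum {y} hy := by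
    simpa [FormalMultilinearSeries.ofScalars_apply_eq, mul_comm] using hf y (by simpa using hy)

theorem eq_iteratedDeriv_div_factorial_of_hasSum {c : ℕ → ℂ} {f : ℂ → ℂ} {R : ℝ≥0}
    (hR : 0 < R) (hf : ∀ z ∈ ball (0 : ℂ) R, HasSum (fun n => c n * z ^ n) (f z)) (n : ℕ) :
    c n = iteratedDeriv n f 0 / n ! := by
  have h := (hasFPowerSeriesOnBall_ofScalars_of_hasSum hR hf).factorial_smul 1 n
  rw [iteratedFDeriv_apply_eq_iteratedDeriv_mul_prod] at h
  simp only [FormalMultilinearSeries.ofScalars_apply_eq, Finset.prod_const_one, one_pow,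
    smul_eq_mul, nsmul_eq_mul, mul_one, one_mul] at h
  rw [← h, mul_div_cancel_left₀ _ (by exact_mod_cast n.factorial_ne_zero)]

theorem natCast_mul_iteratedDeriv_eq_sum {g p : ℂ → ℂ} (hg : AnalyticAt ℂ g 0)
    (hp : AnalyticAt ℂ p 0) (h : (fun z => z * deriv g z) =ᶠ[𝓝 0] fun z => p z * g z) (n : ℕ) :
    n * iteratedDeriv n g 0 = ∑ i ∈ Finset.range (n + 1),
      n.choose i * iteratedDeriv i p 0 * iteratedDeriv (n - i) g 0 := by
  rw [← iteratedDeriv_fun_mul hp.contDiffAt hg.contDiffAt, ← (h.iteratedDeriv n).eq_of_nhds,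
    iteratedDeriv_fun_mul (f := fun z => z) contDiffAt_id hg.deriv.contDiffAt]
  simp only [iteratedDeriv_fun_id_zero]
  rcases n with _ | n
  · simp
  · rw [Finset.sum_eq_single 1 (fun i _ hi => by simp [hi]) (by simp), iteratedDeriv_succ']
    simp

theorem iteratedDeriv_two_eq_of_mul_deriv_eq {g p : ℂ → ℂ} (hg : AnalyticAt ℂ g 0)
    (hp : AnalyticAt ℂ p 0) (h : (fun z => z * deriv g z) =ᶠ[𝓝 0] fun z => p z * g z)
    (hg0 : g 0 = 0) (hg1 : deriv g 0 = 1) (hp0 : p 0 = 1) :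
    iteratedDeriv 2 g 0 = 2 * deriv p 0 := by
  have h2 := natCast_mul_iteratedDeriv_eq_sum hg hp h 2
  simp [Finset.sum_range_succ, hg0, hg1, hp0] at h2
  linear_combination h2

theorem iteratedDeriv_three_eq_of_mul_deriv_eq {g p : ℂ → ℂ} (hg : AnalyticAt ℂ g 0)
    (hp : AnalyticAt ℂ p 0) (h : (fun z => z * deriv g z) =ᶠ[𝓝 0] fun z => p z * g z)
    (hg0 : g 0 = 0) (hg1 : deriv g 0 = 1) (hp0 : p 0 = 1) :
    2 * iteratedDeriv 3 g 0 = 3 * deriv p 0 * iteratedDeriv 2 g 0 + 3 * iteratedDeriv 2 p 0 := by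
  have h3 := natCast_mul_iteratedDeriv_eq_sum hg hp h 3
  simp [Finset.sum_range_succ, hg0, hg1, hp0] at h3
  linear_combination h3

/-- `z g'(z) / g(z)`, extended across `0`: when `g 0 = 0`, `dslope g 0 z = g z / z`. -/
noncomputable def starQuotient (g : ℂ → ℂ) (z : ℂ) : ℂ := deriv g z / dslope g 0 z

section Starlike

variable {g : ℂ → ℂ}

theorem starQuotient_zero (hg1 : deriv g 0 ≠ 0) : starQuotient g 0 = 1 := by
  rw [starQuotient, dslope_same, div_self hg1]

theorem eq_mul_dslope_zero (hg0 : g 0 = 0) (z : ℂ) : g z = z * dslope g 0 z := by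
  simpa [hg0] using (sub_smul_dslope g 0 z).symm

theorem starQuotient_eq_div (hg0 : g 0 = 0) {z : ℂ} (hz : z ≠ 0) :
    starQuotient g z = z * deriv g z / g z := by
  rw [starQuotient, eq_mul_dslope_zero hg0 z, mul_div_mul_left _ _ hz]

theorem dslope_zero_ne_zero (hg0 : g 0 = 0) (hg1 : deriv g 0 ≠ 0) {z : ℂ}
    (hz : z ≠ 0 → g z ≠ 0) : dslope g 0 z ≠ 0 := by
  rcases eq_or_ne z 0 with rfl | hz0
  · rwa [dslope_same]
  · intro h
    exact hz hz0 (by rw [eq_mul_dslope_zero hg0 z, h, mul_zero])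

theorem mul_deriv_eq_starQuotient_mul (hg0 : g 0 = 0) {z : ℂ} (hz : dslope g 0 z ≠ 0) :
    z * deriv g z = starQuotient g z * g z := by
  rw [starQuotient, eq_mul_dslope_zero hg0 z]
  field_simp

theorem differentiableOn_starQuotient {s : Set ℂ} (hs : IsOpen s) (h0 : (0 : ℂ) ∈ s)
    (hg : DifferentiableOn ℂ g s) (hne : ∀ z ∈ s, dslope g 0 z ≠ 0) :
    DifferentiableOn ℂ (starQuotient g) s :=
  (hg.deriv hs).div ((differentiableOn_dslope (hs.mem_nhds h0)).2 hg) hne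

theorem re_starQuotient_nonneg {s : Set ℂ} (hg0 : g 0 = 0) (hg1 : deriv g 0 = 1)
    (hre : ∀ z ∈ s, z ≠ 0 → 0 < (z * deriv g z / g z).re) {z : ℂ} (hz : z ∈ s) :
    0 ≤ (starQuotient g z).re := by
  rcases eq_or_ne z 0 with rfl | hz0
  · simp [starQuotient_zero (hg1 ▸ one_ne_zero)]
  · exact (starQuotient_eq_div hg0 hz0 ▸ hre z hz hz0).le

theorem norm_iteratedDeriv_div_factorial_le_of_starlike (hg : DifferentiableOn ℂ g (ball 0 1))
    (hg0 : g 0 = 0) (hg1 : deriv g 0 = 1) (hne : ∀ z ∈ ball (0 : ℂ) 1, z ≠ 0 → g z ≠ 0)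
    (hre : ∀ z ∈ ball (0 : ℂ) 1, z ≠ 0 → 0 < (z * deriv g z / g z).re) :
    ‖iteratedDeriv 2 g 0 / (2 !)‖ ≤ 2 ∧ ‖iteratedDeriv 3 g 0 / (3 !)‖ ≤ 3 := by
  set P := starQuotient g
  have hP0 : P 0 = 1 := starQuotient_zero (hg1 ▸ one_ne_zero)
  have hslope : ∀ z ∈ ball (0 : ℂ) 1, dslope g 0 z ≠ 0 :=
    fun z hz => dslope_zero_ne_zero hg0 (hg1 ▸ one_ne_zero) (hne z hz)
  have hP : DifferentiableOn ℂ P (ball 0 1) :=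
    differentiableOn_starQuotient isOpen_ball (mem_ball_self one_pos) hg hslope
  have hcarath : ∀ n ≠ 0, ‖iteratedDeriv n P 0 / (n !)‖ ≤ 2 := fun n hn => by
    simpa [hP0] using norm_iteratedDeriv_div_factorial_mul_pow_le_of_re_nonneg hP one_pos
      (fun z hz => re_starQuotient_nonneg hg0 hg1 hre hz) hn
  have hev : (fun z => z * deriv g z) =ᶠ[𝓝 0] fun z => P z * g z :=
    eventually_of_mem (ball_mem_nhds 0 one_pos) fun z hz =>
      mul_deriv_eq_starQuotient_mul hg0 (hslope z hz)
  have hga := hg.analyticAt (ball_mem_nhds 0 one_pos)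
  have hPa := hP.analyticAt (ball_mem_nhds 0 one_pos)
  have h2 := iteratedDeriv_two_eq_of_mul_deriv_eq hga hPa hev hg0 hg1 hP0
  have h3 := iteratedDeriv_three_eq_of_mul_deriv_eq hga hPa hev hg0 hg1 hP0
  have ha1 : ‖deriv P 0‖ ≤ 2 := by simpa using hcarath 1 one_ne_zero
  have ha2 : ‖iteratedDeriv 2 P 0 / 2‖ ≤ 2 := by simpa using hcarath 2 two_ne_zero
  have hb3 : iteratedDeriv 3 g 0 / (3 !) = (deriv P 0 ^ 2 + iteratedDeriv 2 P 0 / 2) / 2 := by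
    simp only [Nat.factorial]
    push_cast
    linear_combination h3 / 12 + deriv P 0 / 4 * h2
  refine ⟨by simpa [h2] using ha1, ?_⟩
  calc ‖iteratedDeriv 3 g 0 / (3 !)‖ ≤ (‖deriv P 0‖ ^ 2 + ‖iteratedDeriv 2 P 0 / 2‖) / 2 := by
        rw [hb3, norm_div, Complex.norm_two, ← norm_pow]
        gcongr
        exact norm_add_le _ _
    _ ≤ (2 ^ 2 + 2) / 2 := by gcongr
    _ = 3 := by norm_num

end Starlike

noncomputable def rotatedKoebe (u z : ℂ) : ℂ := z / (1 - u * z) ^ 2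

theorem hasSum_rotatedKoebe {u z : ℂ} (hz : ‖u * z‖ < 1) :
    HasSum (fun n : ℕ => n * u ^ (n - 1) * z ^ n) (rotatedKoebe u z) := by
  have h := one_div_one_sub_sq_hasFPowerSeriesOnBall_zero.hasSum (y := u * z)
    (by rwa [mem_eball_zero_iff, ← ofReal_norm, ENNReal.ofReal_lt_one])
  simp only [FormalMultilinearSeries.ofScalars_apply_eq, smul_eq_mul, zero_add] at h
  have hterm : ∀ n : ℕ, ((n + 1 : ℕ) : ℂ) * u ^ (n + 1 - 1) * z ^ (n + 1)
      = z * ((n + 1) * (u * z) ^ n) := fun n => by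
    push_cast
    ring
  have hshift := h.mul_left z
  simp only [← hterm, ← div_eq_mul_one_div] at hshift
  simpa [rotatedKoebe] using (hasSum_nat_add_iff (f := fun n : ℕ => n * u ^ (n - 1) * z ^ n) 1).mp hshift

theorem one_sub_ne_zero_of_norm_lt_one {w : ℂ} (hw : ‖w‖ < 1) : 1 - w ≠ 0 := by
  rw [sub_ne_zero]
  rintro rfl
  simp at hw

theorem re_one_add_div_one_sub_pos {w : ℂ} (hw : ‖w‖ < 1) : 0 < ((1 + w) / (1 - w)).re := by
  have hnum : ((1 + w) * conj (1 - w)).re = 1 - ‖w‖ ^ 2 := by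
    rw [← normSq_eq_norm_sq, normSq_apply]
    simp only [mul_re, conj_re, conj_im, add_re, sub_re, add_im, sub_im, one_re, one_im]
    ring
  rw [div_eq_mul_inv, inv_def, ← mul_assoc, re_mul_ofReal, hnum]
  have := normSq_pos.mpr (one_sub_ne_zero_of_norm_lt_one hw)
  have : ‖w‖ ^ 2 < 1 := by nlinarith [norm_nonneg w]
  positivity

theorem injOn_rotatedKoebe {u : ℂ} (hu : ‖u‖ ≤ 1) : InjOn (rotatedKoebe u) (ball 0 1) := by
  have hlt : ∀ z ∈ ball (0 : ℂ) 1, ‖u * z‖ < 1 := fun z hz => by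
    rw [norm_mul]
    exact lt_of_le_of_lt (mul_le_of_le_one_left (norm_nonneg z) hu) (mem_ball_zero_iff.mp hz)
  intro z₁ hz₁ z₂ hz₂ heq
  have h₁ := one_sub_ne_zero_of_norm_lt_one (hlt z₁ hz₁)
  have h₂ := one_sub_ne_zero_of_norm_lt_one (hlt z₂ hz₂)
  rw [rotatedKoebe, rotatedKoebe, div_eq_div_iff (pow_ne_zero 2 h₁) (pow_ne_zero 2 h₂)] at heq
  have hprod : ‖u * z₁ * (u * z₂)‖ < 1 := by
    rw [norm_mul]
    nlinarith [hlt z₁ hz₁, hlt z₂ hz₂, norm_nonneg (u * z₁), norm_nonneg (u * z₂)]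
  have hfac : (z₁ - z₂) * (1 - u * z₁ * (u * z₂)) = 0 := by linear_combination heq
  exact sub_eq_zero.mp ((mul_eq_zero.mp hfac).resolve_right (one_sub_ne_zero_of_norm_lt_one hprod))

theorem mul_deriv_rotatedKoebe_div {u z : ℂ} (hz : z ≠ 0) (huz : 1 - u * z ≠ 0) :
    z * deriv (rotatedKoebe u) z / rotatedKoebe u z = (1 + u * z) / (1 - u * z) := by
  have hderiv : HasDerivAt (rotatedKoebe u) _ z := (hasDerivAt_id' z).fun_div
    ((((hasDerivAt_id' z).const_mul u).const_sub 1).fun_pow 2) (pow_ne_zero 2 huz)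
  rw [hderiv.deriv, rotatedKoebe, Nat.cast_ofNat, Nat.add_one_sub_one, pow_one]
  field_simp
  ring

theorem stmt_0 :
    (∀ (g : ℂ → ℂ) (b : ℕ → ℂ),
        b 0 = 0 →
        b 1 = 1 →
        (∀ z ∈ Metric.ball (0:ℂ) 1, HasSum (fun n => b n * z ^ n) (g z)) →
        Set.InjOn g (Metric.ball (0:ℂ) 1) →
        (∀ z ∈ Metric.ball (0:ℂ) 1, z ≠ 0 → 0 < (z * deriv g z / g z).re) →
        ‖b 2 ^ 2 - b 3 ^ 2‖ ≤ 13) ∧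
    (∃ (g : ℂ → ℂ) (b : ℕ → ℂ),
        b 0 = 0 ∧
        b 1 = 1 ∧
        (∀ z ∈ Metric.ball (0:ℂ) 1, HasSum (fun n => b n * z ^ n) (g z)) ∧
        Set.InjOn g (Metric.ball (0:ℂ) 1) ∧
        (∀ z ∈ Metric.ball (0:ℂ) 1, z ≠ 0 → 0 < (z * deriv g z / g z).re) ∧
        ‖b 2 ^ 2 - b 3 ^ 2‖ = 13) := by
  refine ⟨fun g b hb0 hb1 hsum hinj hre => ?_, ?_⟩
  · have hsum' : ∀ z ∈ ball (0 : ℂ) ((1 : ℝ≥0) : ℝ), HasSum (fun n => b n * z ^ n) (g z) := by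
      simpa using hsum
    have hcoeff := eq_iteratedDeriv_div_factorial_of_hasSum one_pos hsum'
    have hg : DifferentiableOn ℂ g (ball 0 1) := by
      have := (hasFPowerSeriesOnBall_ofScalars_of_hasSum one_pos hsum').differentiableOn
      rwa [eball_coe, NNReal.coe_one] at this
    have hg0 : g 0 = 0 := by simpa [hb0] using (hcoeff 0).symm
    have hg1 : deriv g 0 = 1 := by simpa [hb1] using (hcoeff 1).symm
    have hne : ∀ z ∈ ball (0 : ℂ) 1, z ≠ 0 → g z ≠ 0 := fun z hz hz0 hgz =>
      hz0 (hinj hz (mem_ball_self one_pos) (hgz.trans hg0.symm))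
    obtain ⟨hb2, hb3⟩ := norm_iteratedDeriv_div_factorial_le_of_starlike hg hg0 hg1 hne hre
    rw [← hcoeff] at hb2 hb3
    calc ‖b 2 ^ 2 - b 3 ^ 2‖ ≤ ‖b 2‖ ^ 2 + ‖b 3‖ ^ 2 := by
          rw [← norm_pow, ← norm_pow]
          exact norm_sub_le _ _
      _ ≤ 2 ^ 2 + 3 ^ 2 := by gcongr
      _ = 13 := by norm_num
  · have hlt : ∀ z ∈ ball (0 : ℂ) 1, ‖I * z‖ < 1 := fun z hz => by simpa using hz
    refine ⟨rotatedKoebe I, fun n => n * I ^ (n - 1), by simp, by simp,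
      fun z hz => hasSum_rotatedKoebe (hlt z hz), injOn_rotatedKoebe (by simp),
      fun z hz hz0 => ?_, ?_⟩
    · rw [mul_deriv_rotatedKoebe_div hz0 (one_sub_ne_zero_of_norm_lt_one (hlt z hz))]
      exact re_one_add_div_one_sub_pos (hlt z hz)
    · simp only [mul_pow, ← pow_mul]
      norm_num [pow_succ, I_sq]
end

section
/- Let -1 ≤ E < D ≤ 1 with |D - 2E| ≥ 1. If g(z) = z + b_2 z^2 + b_3 z^3 + ... is a Janowski starlike function in S*[D,E], then |b_2^2 - b_3^2| ≤ (D-E)^2 (D^2 + 4E^2 - 4DE + 4)/4, and this bound is sharp. -/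
/-!
Write `ω(z) = c₁ z + c₂ z² + ⋯` for the Schwarz function. Dividing `z g' (1 + E ω) = g (1 + D ω)`
by `z` and comparing the coefficients of `z` and `z²` gives `b₂ = (D - E) c₁` and
`2 b₃ = (D - E) c₂ + (D - 2E)(D - E) c₁²`. The Schwarz–Pick lemma for `ω(z) / z` gives
`|c₂| ≤ 1 - |c₁|²`, and with `|b₂² - b₃²| ≤ |b₂|² + |b₃|²` the bound becomes an elementary
maximisation in `|c₁|` and `|c₂|`. Equality holds for `ω(z) = i z`: the corresponding function
`z exp ∫₀ᶻ (D - E) i / (1 + E i t) dt` exists because holomorphic functions on a disc have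
primitives.
-/

open Complex Metric Set Filter Topology Finset FormalMultilinearSeries ComplexConjugate

section PowerSeries

variable {𝕜 : Type*} [NontriviallyNormedField 𝕜]

theorem FormalMultilinearSeries.coeff_const_add_smul (a c : 𝕜)
    (p : FormalMultilinearSeries 𝕜 𝕜 𝕜) (n : ℕ) :
    (constFormalMultilinearSeries 𝕜 𝕜 a + c • p).coeff n =
      (if n = 0 then a else 0) + c * p.coeff n := by
  cases n with
  | zero =>
    simp only [coeff, add_apply, smul_apply, _root_.add_apply, _root_.smul_apply,
      constFormalMultilinearSeries_apply_zero, ContinuousMultilinearMap.uncurry0_apply, smul_eq_mul]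
    rfl
  | succ n =>
    simp only [coeff, add_apply, smul_apply, _root_.add_apply, _root_.smul_apply,
      constFormalMultilinearSeries_apply_succ, smul_eq_mul]
    simp

theorem hasFPowerSeriesAt_ofScalars_of_hasSum {f : 𝕜 → 𝕜} {b : ℕ → 𝕜} {r : ℝ} (hr : 0 < r)
    (h : ∀ z ∈ ball (0 : 𝕜) r, HasSum (fun n => b n * z ^ n) (f z)) :
    HasFPowerSeriesAt f (ofScalars 𝕜 b) 0 :=
  hasFPowerSeriesAt_iff.mpr <| by
    filter_upwards [ball_mem_nhds 0 hr] with z hz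
    simpa [coeff_ofScalars, mul_comm] using h z hz

variable [CompleteSpace 𝕜]

theorem HasFPowerSeriesAt.mul {f h : 𝕜 → 𝕜} {p q : FormalMultilinearSeries 𝕜 𝕜 𝕜}
    (hf : HasFPowerSeriesAt f p 0) (hh : HasFPowerSeriesAt h q 0) :
    HasFPowerSeriesAt (f * h)
      (ofScalars 𝕜 fun n => ∑ k ∈ range (n + 1), p.coeff k * q.coeff (n - k)) 0 := by
  obtain ⟨r₁, hr₁⟩ := hf
  obtain ⟨r₂, hr₂⟩ := hh
  rw [hasFPowerSeriesAt_iff]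
  filter_upwards [eball_mem_nhds 0 hr₁.r_pos, eball_mem_nhds 0 hr₂.r_pos] with z hz₁ hz₂
  have hcauchy := hasSum_sum_range_mul_of_summable_norm
    (p.summable_norm_apply (eball_subset_eball hr₁.r_le hz₁))
    (q.summable_norm_apply (eball_subset_eball hr₂.r_le hz₂))
  rw [(hr₁.hasSum hz₁).tsum_eq, (hr₂.hasSum hz₂).tsum_eq] at hcauchy
  simp only [zero_add] at hcauchy ⊢
  refine hcauchy.congr_fun fun n => ?_
  simp only [coeff_ofScalars, apply_eq_pow_smul_coeff, smul_eq_mul, mul_sum]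
  refine sum_congr rfl fun k hk => ?_
  rw [← Nat.add_sub_of_le (mem_range_succ_iff.mp hk)]
  simp only [Nat.add_sub_cancel_left, pow_add]
  ring

theorem HasFPowerSeriesAt.deriv_ofScalars {f : 𝕜 → 𝕜} {p : FormalMultilinearSeries 𝕜 𝕜 𝕜}
    {x : 𝕜} (hf : HasFPowerSeriesAt f p x) :
    HasFPowerSeriesAt (deriv f) (ofScalars 𝕜 fun n => (n + 1) * p.coeff (n + 1)) x := by
  obtain ⟨r, hr⟩ := hf
  refine ⟨r, ?_⟩
  convert (ContinuousLinearMap.apply 𝕜 𝕜 (1 : 𝕜)).comp_hasFPowerSeriesOnBall hr.fderiv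
  · rfl
  · ext n
    simp

end PowerSeries

section SchwarzPick

theorem norm_one_sub_conj_mul_sq_sub_norm_sub_sq (a w : ℂ) :
    ‖1 - conj a * w‖ ^ 2 - ‖w - a‖ ^ 2 = (1 - ‖a‖ ^ 2) * (1 - ‖w‖ ^ 2) := by
  simp only [Complex.sq_norm, Complex.normSq_apply, Complex.sub_re, Complex.sub_im,
    Complex.mul_re, Complex.mul_im, Complex.conj_re, Complex.conj_im, Complex.one_re,
    Complex.one_im]
  ring

theorem norm_sub_lt_norm_one_sub_conj_mul {a w : ℂ} (ha : ‖a‖ < 1) (hw : ‖w‖ < 1) :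
    ‖w - a‖ < ‖1 - conj a * w‖ := by
  have hpos : 0 < (1 - ‖a‖ ^ 2) * (1 - ‖w‖ ^ 2) := by
    have := norm_nonneg a
    have := norm_nonneg w
    apply mul_pos <;> nlinarith
  have key := norm_one_sub_conj_mul_sq_sub_norm_sub_sq a w
  exact lt_of_pow_lt_pow_left₀ 2 (norm_nonneg _) (by linarith)

theorem one_sub_conj_mul_ne_zero {a w : ℂ} (ha : ‖a‖ < 1) (hw : ‖w‖ < 1) :
    1 - conj a * w ≠ 0 :=
  norm_pos_iff.mp ((norm_nonneg _).trans_lt (norm_sub_lt_norm_one_sub_conj_mul ha hw))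

theorem norm_sub_div_one_sub_conj_mul_lt_one {a w : ℂ} (ha : ‖a‖ < 1) (hw : ‖w‖ < 1) :
    ‖(w - a) / (1 - conj a * w)‖ < 1 := by
  rw [norm_div, div_lt_one (norm_pos_iff.mpr (one_sub_conj_mul_ne_zero ha hw))]
  exact norm_sub_lt_norm_one_sub_conj_mul ha hw

theorem norm_deriv_le_one_sub_sq_of_mapsTo_ball {φ : ℂ → ℂ}
    (hd : DifferentiableOn ℂ φ (ball 0 1)) (hm : MapsTo φ (ball 0 1) (ball 0 1)) :
    ‖deriv φ 0‖ ≤ 1 - ‖φ 0‖ ^ 2 := by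
  have h0 : (0 : ℂ) ∈ ball 0 1 := mem_ball_self one_pos
  have hφ : ∀ z ∈ ball (0 : ℂ) 1, ‖φ z‖ < 1 := fun z hz => mem_ball_zero_iff.mp (hm hz)
  have ha : ‖φ 0‖ < 1 := hφ 0 h0
  generalize hφ0 : φ 0 = a at ha ⊢
  set ψ : ℂ → ℂ := fun z => (φ z - a) / (1 - conj a * φ z)
  have hψd : DifferentiableOn ℂ ψ (ball 0 1) :=
    (hd.sub_const a).div ((differentiableOn_const 1).sub (hd.const_mul _))
      fun z hz => one_sub_conj_mul_ne_zero ha (hφ z hz)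
  have hψm : MapsTo ψ (ball 0 1) (closedBall (ψ 0) 1) := fun z hz => by
    simpa [ψ, hφ0] using (norm_sub_div_one_sub_conj_mul_lt_one ha (hφ z hz)).le
  have hden : 1 - conj a * a = ((1 - ‖a‖ ^ 2 : ℝ) : ℂ) := by
    rw [mul_comm, Complex.mul_conj, ← Complex.sq_norm]
    push_cast
    ring
  have hψ' : HasDerivAt ψ (deriv φ 0 / ((1 - ‖a‖ ^ 2 : ℝ) : ℂ)) 0 := by
    have hφ' := (hd.differentiableAt (isOpen_ball.mem_nhds h0)).hasDerivAt
    have hne := one_sub_conj_mul_ne_zero ha ha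
    refine ((hφ'.sub_const a).div ((hφ'.const_mul (conj a)).const_sub 1)
      (by rwa [hφ0])).congr_deriv ?_
    rw [hφ0, sub_self, zero_mul, sub_zero, ← hden, sq, mul_div_mul_right _ _ hne]
  have hpos : 0 < 1 - ‖a‖ ^ 2 := by nlinarith [norm_nonneg a]
  have := norm_deriv_le_one_of_mapsTo_ball hψd hψm one_pos
  rwa [hψ'.deriv, norm_div, Complex.norm_real, Real.norm_of_nonneg hpos.le,
    div_le_one hpos] at this

theorem norm_deriv_dslope_le_one_sub_sq {ω : ℂ → ℂ} (hd : DifferentiableOn ℂ ω (ball 0 1))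
    (hm : MapsTo ω (ball 0 1) (ball 0 1)) (h0 : ω 0 = 0) :
    ‖deriv (dslope ω 0) 0‖ ≤ 1 - ‖deriv ω 0‖ ^ 2 := by
  have hball : ball (0 : ℂ) 1 ∈ 𝓝 0 := ball_mem_nhds 0 one_pos
  have hφd : DifferentiableOn ℂ (dslope ω 0) (ball 0 1) := (differentiableOn_dslope hball).mpr hd
  have hm' : MapsTo ω (ball 0 1) (closedBall (ω 0) 1) := by
    rw [h0]
    exact hm.mono_right ball_subset_closedBall
  have hφle : ∀ z ∈ ball (0 : ℂ) 1, ‖dslope ω 0 z‖ ≤ 1 := fun z hz => by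
    simpa using Complex.norm_dslope_le_div_of_mapsTo_ball hd hm' hz
  rw [← dslope_same ω 0]
  by_cases hmax : ∃ z₀ ∈ ball (0 : ℂ) 1, ‖dslope ω 0 z₀‖ = 1
  · -- by the maximum modulus principle `dslope ω 0` is then constant, of modulus one
    obtain ⟨z₀, hz₀, hz₀1⟩ := hmax
    have hconst : EqOn (dslope ω 0) (fun _ => dslope ω 0 z₀) (ball 0 1) :=
      Complex.eqOn_of_isPreconnected_of_isMaxOn_norm (convex_ball 0 1).isPreconnected isOpen_ball
        hφd hz₀ fun z hz => by simpa [hz₀1] using hφle z hz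
    rw [(eventuallyEq_of_mem hball hconst).deriv_eq, deriv_const, hconst (mem_of_mem_nhds hball),
      hz₀1]
    norm_num
  · push Not at hmax
    exact norm_deriv_le_one_sub_sq_of_mapsTo_ball hφd fun z hz =>
      mem_ball_zero_iff.mpr ((hφle z hz).lt_of_ne (hmax z hz))

end SchwarzPick

theorem four_mul_sq_add_sq_le {x y t : ℝ} (hy : 0 ≤ y) (hxy : y ≤ 1 - x ^ 2) (ht : 0 ≤ t) :
    4 * x ^ 2 + (y + t * x ^ 2) ^ 2 ≤ 4 + t ^ 2 := by
  have hx : 0 ≤ 1 - x ^ 2 := hy.trans hxy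
  have hu : y + t * x ^ 2 ≤ 1 + (t - 1) * x ^ 2 := by linarith
  have hu0 : 0 ≤ y + t * x ^ 2 := by positivity
  -- `4 + t² - 4s - (1 + (t - 1) s)² = (1 - s) (3 + t² + (t - 1)² s)` with `s = x²`
  nlinarith [pow_le_pow_left₀ hu0 hu 2,
    mul_nonneg hx (by positivity : 0 ≤ 3 + t ^ 2 + (t - 1) ^ 2 * x ^ 2)]

theorem norm_sq_sub_sq_le_of_coeff_relations {A B b₂ b₃ c₁ c₂ : ℂ} (h₂ : b₂ = A * c₁)
    (h₃ : 2 * b₃ = A * c₂ + B * A * c₁ ^ 2) (hc : ‖c₂‖ ≤ 1 - ‖c₁‖ ^ 2) :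
    ‖b₂ ^ 2 - b₃ ^ 2‖ ≤ ‖A‖ ^ 2 * (4 + ‖B‖ ^ 2) / 4 := by
  have hb₂ : ‖b₂‖ = ‖A‖ * ‖c₁‖ := by rw [h₂, norm_mul]
  have hb₃ : 2 * ‖b₃‖ ≤ ‖A‖ * (‖c₂‖ + ‖B‖ * ‖c₁‖ ^ 2) := by
    calc 2 * ‖b₃‖ = ‖A * c₂ + B * A * c₁ ^ 2‖ := by rw [← h₃, norm_mul, RCLike.norm_ofNat]
      _ ≤ ‖A * c₂‖ + ‖B * A * c₁ ^ 2‖ := norm_add_le _ _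
      _ = ‖A‖ * (‖c₂‖ + ‖B‖ * ‖c₁‖ ^ 2) := by simp only [norm_mul, norm_pow]; ring
  calc ‖b₂ ^ 2 - b₃ ^ 2‖ ≤ ‖b₂‖ ^ 2 + ‖b₃‖ ^ 2 := by
        rw [← norm_pow, ← norm_pow]
        exact norm_sub_le _ _
    _ ≤ ‖A‖ ^ 2 * ‖c₁‖ ^ 2 + (‖A‖ * (‖c₂‖ + ‖B‖ * ‖c₁‖ ^ 2) / 2) ^ 2 := by
        rw [hb₂, mul_pow]
        gcongr
        linarith
    _ = ‖A‖ ^ 2 * (4 * ‖c₁‖ ^ 2 + (‖c₂‖ + ‖B‖ * ‖c₁‖ ^ 2) ^ 2) / 4 := by ring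
    _ ≤ ‖A‖ ^ 2 * (4 + ‖B‖ ^ 2) / 4 := by
        gcongr ‖A‖ ^ 2 * ?_ / 4
        exact four_mul_sq_add_sq_le (norm_nonneg c₂) hc (norm_nonneg B)

theorem one_add_mul_ne_zero {𝕜 : Type*} [NormedField 𝕜] {a w : 𝕜} (ha : ‖a‖ ≤ 1) (hw : ‖w‖ < 1) :
    1 + a * w ≠ 0 := by
  intro h0
  have : ‖a * w‖ < 1 := by
    rw [norm_mul]
    exact mul_lt_one_of_nonneg_of_lt_one_right ha (norm_nonneg w) hw
  rw [eq_neg_of_add_eq_zero_right h0, norm_neg, norm_one] at this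
  exact this.false

theorem dslope_const_mul_zero {𝕜 : Type*} [NontriviallyNormedField 𝕜] (c : 𝕜) :
    dslope (fun z => c * z) 0 = fun _ => c := by
  funext z
  rcases eq_or_ne z 0 with rfl | hz
  · simp [dslope_same]
  · simp [dslope_of_ne _ hz, slope_def_field, hz]

section Janowski

/-- The Janowski class `S*[D, E]`, without the normalisation `g 0 = 0`, `deriv g 0 = 1`. -/
def JanowskiStarlike (D E : ℂ) (g : ℂ → ℂ) : Prop :=
  ∃ ω : ℂ → ℂ, AnalyticOn ℂ ω (ball 0 1) ∧ ω 0 = 0 ∧ MapsTo ω (ball 0 1) (ball 0 1) ∧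
    ∀ z ∈ ball (0 : ℂ) 1, z ≠ 0 → z * deriv g z / g z = (1 + D * ω z) / (1 + E * ω z)

variable {D E : ℂ} {g ω : ℂ → ℂ}

theorem deriv_mul_eventuallyEq_dslope_mul (hg0 : g 0 = 0) (hω : ContinuousAt ω 0)
    (hω0 : ω 0 = 0) (h : ∀ᶠ z in 𝓝[≠] 0, z * deriv g z / g z = (1 + D * ω z) / (1 + E * ω z)) :
    (fun z => deriv g z * (1 + E * ω z)) =ᶠ[𝓝 0] fun z => dslope g 0 z * (1 + D * ω z) := by
  have hne (F : ℂ) : ∀ᶠ z in 𝓝 0, 1 + F * ω z ≠ 0 := by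
    have : Tendsto (fun z => 1 + F * ω z) (𝓝 0) (𝓝 1) := by
      simpa [hω0] using ((hω.const_mul F).const_add 1).tendsto
    exact this.eventually_ne one_ne_zero
  filter_upwards [eventually_nhdsWithin_iff.mp h, hne D, hne E] with z hz hD hE
  rcases eq_or_ne z 0 with rfl | hz0
  · simp [hω0]
  have hgz : g z = z * dslope g 0 z := by simpa using (sub_smul_dslope_of_zero hg0 z).symm
  have hG : g z ≠ 0 := by
    rintro hg
    rw [hg, div_zero] at hz
    exact div_ne_zero hD hE (hz hz0).symm
  have := hz hz0
  rw [div_eq_div_iff hG hE, hgz] at this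
  exact mul_left_cancel₀ hz0 (by linear_combination this)

theorem janowski_coeff_two_three {b : ℕ → ℂ} (hb : HasFPowerSeriesAt g (ofScalars ℂ b) 0)
    (hb0 : b 0 = 0) (hb1 : b 1 = 1) (hω : AnalyticAt ℂ ω 0) (hω0 : ω 0 = 0)
    (h : ∀ᶠ z in 𝓝[≠] 0, z * deriv g z / g z = (1 + D * ω z) / (1 + E * ω z)) :
    b 2 = (D - E) * deriv ω 0 ∧
      2 * b 3 = (D - E) * deriv (dslope ω 0) 0 + (D - 2 * E) * (D - E) * deriv ω 0 ^ 2 := by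
  obtain ⟨q, hq⟩ := hω
  have hg0 : g 0 = 0 := by
    rw [← hb.coeff_zero (fun _ => 1)]
    simp [hb0]
  have hq0 : q.coeff 0 = 0 := by
    rw [← hω0]
    exact hq.coeff_zero _
  have hc₁ : deriv ω 0 = q.coeff 1 := hq.deriv
  have hc₂ : deriv (dslope ω 0) 0 = q.coeff 2 := by
    rw [hq.has_fpower_series_dslope_fslope.deriv]
    exact coeff_fslope
  have hq' (F : ℂ) : HasFPowerSeriesAt (fun z => 1 + F * ω z)
      (constFormalMultilinearSeries ℂ ℂ 1 + F • q) 0 :=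
    hasFPowerSeriesAt_const.add (hq.const_smul (c := F))
  have hL := hb.deriv_ofScalars.mul (hq' E)
  have hR := hb.has_fpower_series_dslope_fslope.mul (hq' D)
  have hcoeff := ofScalars_series_injective ℂ ℂ <| hL.eq_formalMultilinearSeries_of_eventually hR
    (deriv_mul_eventuallyEq_dslope_mul hg0 hq.continuousAt hω0 h)
  have h1 := congrFun hcoeff 1
  have h2 := congrFun hcoeff 2
  simp only [sum_range_succ, sum_range_zero, coeff_ofScalars, coeff_fslope, coeff_const_add_smul,
    hb1, hq0] at h1 h2
  norm_num at h1 h2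
  rw [hc₁, hc₂]
  constructor
  · linear_combination h1
  · linear_combination h2 + (D - 2 * E) * q.coeff 1 * h1

theorem JanowskiStarlike.norm_sq_sub_sq_le {b : ℕ → ℂ} (hg : JanowskiStarlike D E g)
    (hb0 : b 0 = 0) (hb1 : b 1 = 1)
    (hsum : ∀ z ∈ ball (0 : ℂ) 1, HasSum (fun n => b n * z ^ n) (g z)) :
    ‖b 2 ^ 2 - b 3 ^ 2‖ ≤ ‖D - E‖ ^ 2 * (4 + ‖D - 2 * E‖ ^ 2) / 4 := by
  obtain ⟨ω, hωa, hω0, hωm, hode⟩ := hg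
  have hball : ball (0 : ℂ) 1 ∈ 𝓝 0 := ball_mem_nhds 0 one_pos
  have hev : ∀ᶠ z in 𝓝[≠] 0, z * deriv g z / g z = (1 + D * ω z) / (1 + E * ω z) :=
    eventually_nhdsWithin_iff.mpr (eventually_of_mem hball hode)
  obtain ⟨h₂, h₃⟩ := janowski_coeff_two_three (hasFPowerSeriesAt_ofScalars_of_hasSum one_pos hsum)
    hb0 hb1 (hωa.analyticAt hball) hω0 hev
  exact norm_sq_sub_sq_le_of_coeff_relations h₂ h₃
    (norm_deriv_dslope_le_one_sub_sq hωa.differentiableOn hωm hω0)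

theorem exists_janowski_of_differentiableOn {r : ℝ} (hr : 0 < r)
    (hω : DifferentiableOn ℂ ω (ball 0 r)) (hω0 : ω 0 = 0)
    (hE : ∀ z ∈ ball (0 : ℂ) r, 1 + E * ω z ≠ 0) :
    ∃ g : ℂ → ℂ, DifferentiableOn ℂ g (ball 0 r) ∧ g 0 = 0 ∧ deriv g 0 = 1 ∧
      ∀ z ∈ ball (0 : ℂ) r, z ≠ 0 → z * deriv g z / g z = (1 + D * ω z) / (1 + E * ω z) := by
  set h : ℂ → ℂ := fun z => (D - E) * dslope ω 0 z / (1 + E * ω z)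
  have hh : DifferentiableOn ℂ h (ball 0 r) :=
    (((differentiableOn_dslope (ball_mem_nhds 0 hr)).mpr hω).const_mul _).div
      ((differentiableOn_const 1).add (hω.const_mul E)) hE
  -- `g = z exp F` with `F' = h` solves `z g' / g = 1 + z h = (1 + D ω) / (1 + E ω)`
  obtain ⟨F, hF0, hF⟩ := hh.isExactOn_ball.with_val_at 0 0
  have hg : ∀ z ∈ ball (0 : ℂ) r, HasDerivAt (fun z => z * Complex.exp (F z))
      (Complex.exp (F z) + z * (Complex.exp (F z) * h z)) z := fun z hz =>
    ((hasDerivAt_id z).mul (hF z hz).cexp).congr_deriv (by simp)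
  refine ⟨fun z => z * Complex.exp (F z),
    fun z hz => (hg z hz).differentiableAt.differentiableWithinAt, by simp, ?_, fun z hz hz0 => ?_⟩
  · simp [(hg 0 (mem_ball_self hr)).deriv, hF0]
  · have hω' : z * dslope ω 0 z = ω z := by simpa using sub_smul_dslope_of_zero hω0 z
    rw [(hg z hz).deriv, div_eq_div_iff (mul_ne_zero hz0 (Complex.exp_ne_zero _)) (hE z hz)]
    simp only [h]
    field_simp [hE z hz]
    linear_combination (D - E) * hω'

theorem exists_janowskiStarlike_sq_sub_sq_eq (hE : ‖E‖ ≤ 1) :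
    ∃ (g : ℂ → ℂ) (b : ℕ → ℂ), b 0 = 0 ∧ b 1 = 1 ∧
      (∀ z ∈ ball (0 : ℂ) 1, HasSum (fun n => b n * z ^ n) (g z)) ∧ JanowskiStarlike D E g ∧
      b 2 ^ 2 - b 3 ^ 2 = -((D - E) ^ 2 * (4 + (D - 2 * E) ^ 2) / 4) := by
  set ω : ℂ → ℂ := fun z => I * z
  have hωd : Differentiable ℂ ω := differentiable_id.const_mul _
  have hωm : MapsTo ω (ball 0 1) (ball 0 1) := fun z hz => by simpa [ω] using hz
  have hω0 : ω 0 = 0 := by simp [ω]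
  obtain ⟨g, hgd, hg0, hg1, hode⟩ := exists_janowski_of_differentiableOn (D := D) one_pos
    hωd.differentiableOn hω0 fun z hz => one_add_mul_ne_zero hE (mem_ball_zero_iff.mp (hωm hz))
  set b : ℕ → ℂ := fun n => (n.factorial : ℂ)⁻¹ * iteratedDeriv n g 0
  have hsum : ∀ z ∈ ball (0 : ℂ) 1, HasSum (fun n => b n * z ^ n) (g z) := fun z hz => by
    simpa [b, mul_comm, mul_left_comm] using hasSum_taylorSeries_on_ball hgd hz
  have hb0 : b 0 = 0 := by simp [b, hg0]
  have hb1 : b 1 = 1 := by simp [b, hg1]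
  obtain ⟨h₂, h₃⟩ := janowski_coeff_two_three (hasFPowerSeriesAt_ofScalars_of_hasSum one_pos hsum)
    hb0 hb1 (hωd.analyticAt 0) hω0
    (eventually_nhdsWithin_iff.mpr (eventually_of_mem (ball_mem_nhds 0 one_pos) hode))
  have hc₁ : deriv ω 0 = I := by simp [ω]
  have hb₃ : b 3 = -((D - 2 * E) * (D - E) / 2) := by
    rw [hc₁, dslope_const_mul_zero, deriv_const] at h₃
    linear_combination h₃ / 2 + (D - 2 * E) * (D - E) / 2 * I_sq
  refine ⟨g, b, hb0, hb1, hsum, ⟨ω, hωd.differentiableOn.analyticOn isOpen_ball, hω0, hωm, hode⟩,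
    ?_⟩
  rw [h₂, hc₁, hb₃]
  linear_combination (D - E) ^ 2 * I_sq

end Janowski

theorem stmt_4_general (D E : ℝ) (hE : -1 ≤ E) (hED : E < D) (hD : D ≤ 1) :
    (∀ (g : ℂ → ℂ) (b : ℕ → ℂ),
        b 0 = 0 →
        b 1 = 1 →
        (∀ z ∈ Metric.ball (0:ℂ) 1, HasSum (fun n => b n * z ^ n) (g z)) →
        (∃ ω : ℂ → ℂ, AnalyticOn ℂ ω (Metric.ball (0:ℂ) 1) ∧ ω 0 = 0 ∧ (∀ z ∈ Metric.ball (0:ℂ) 1, ω z ∈ Metric.ball (0:ℂ) 1) ∧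
          (∀ z ∈ Metric.ball (0:ℂ) 1, z ≠ 0 → z * deriv g z / g z = (1 + (D : ℂ) * ω z) / (1 + (E : ℂ) * ω z))) →
        ‖b 2 ^ 2 - b 3 ^ 2‖ ≤ (D - E) ^ 2 * (D ^ 2 + 4 * E ^ 2 - 4 * D * E + 4) / 4) ∧
    (∃ (g : ℂ → ℂ) (b : ℕ → ℂ),
        b 0 = 0 ∧
        b 1 = 1 ∧
        (∀ z ∈ Metric.ball (0:ℂ) 1, HasSum (fun n => b n * z ^ n) (g z)) ∧
        (∃ ω : ℂ → ℂ, AnalyticOn ℂ ω (Metric.ball (0:ℂ) 1) ∧ ω 0 = 0 ∧ (∀ z ∈ Metric.ball (0:ℂ) 1, ω z ∈ Metric.ball (0:ℂ) 1) ∧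
          (∀ z ∈ Metric.ball (0:ℂ) 1, z ≠ 0 → z * deriv g z / g z = (1 + (D : ℂ) * ω z) / (1 + (E : ℂ) * ω z))) ∧
        ‖b 2 ^ 2 - b 3 ^ 2‖ = (D - E) ^ 2 * (D ^ 2 + 4 * E ^ 2 - 4 * D * E + 4) / 4) := by
  have hsq (x : ℝ) : ‖(x : ℂ)‖ ^ 2 = x ^ 2 := by rw [norm_real, Real.norm_eq_abs, sq_abs]
  have hbound : ‖(D : ℂ) - E‖ ^ 2 * (4 + ‖(D : ℂ) - 2 * E‖ ^ 2) / 4 =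
      (D - E) ^ 2 * (D ^ 2 + 4 * E ^ 2 - 4 * D * E + 4) / 4 := by
    rw [← ofReal_sub, ← ofReal_ofNat, ← ofReal_mul, ← ofReal_sub, hsq, hsq]
    ring
  refine ⟨fun g b hb0 hb1 hsum hg =>
    hbound ▸ JanowskiStarlike.norm_sq_sub_sq_le hg hb0 hb1 hsum, ?_⟩
  obtain ⟨g, b, hb0, hb1, hsum, hg, hb⟩ := exists_janowskiStarlike_sq_sub_sq_eq (D := D)
    (E := E) (by rw [norm_real, Real.norm_eq_abs, abs_le]; constructor <;> linarith)
  refine ⟨g, b, hb0, hb1, hsum, hg, ?_⟩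
  have hreal : -(((D : ℂ) - E) ^ 2 * (4 + ((D : ℂ) - 2 * E) ^ 2) / 4) =
      ((-((D - E) ^ 2 * (4 + (D - 2 * E) ^ 2) / 4) : ℝ) : ℂ) := by
    push_cast
    ring
  rw [hb, hreal, norm_real, Real.norm_eq_abs, abs_neg, abs_of_nonneg (by positivity)]
  ring

theorem stmt_4 (D E : ℝ) (hE : -1 ≤ E) (hED : E < D) (hD : D ≤ 1)
    (hcond : 1 ≤ |D - 2 * E|) :
    (∀ (g : ℂ → ℂ) (b : ℕ → ℂ),
        b 0 = 0 →
        b 1 = 1 →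
        (∀ z ∈ Metric.ball (0:ℂ) 1, HasSum (fun n => b n * z ^ n) (g z)) →
        (∃ ω : ℂ → ℂ, AnalyticOn ℂ ω (Metric.ball (0:ℂ) 1) ∧ ω 0 = 0 ∧ (∀ z ∈ Metric.ball (0:ℂ) 1, ω z ∈ Metric.ball (0:ℂ) 1) ∧
          (∀ z ∈ Metric.ball (0:ℂ) 1, z ≠ 0 → z * deriv g z / g z = (1 + (D : ℂ) * ω z) / (1 + (E : ℂ) * ω z))) →
        ‖b 2 ^ 2 - b 3 ^ 2‖ ≤ (D - E) ^ 2 * (D ^ 2 + 4 * E ^ 2 - 4 * D * E + 4) / 4) ∧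
    (∃ (g : ℂ → ℂ) (b : ℕ → ℂ),
        b 0 = 0 ∧
        b 1 = 1 ∧
        (∀ z ∈ Metric.ball (0:ℂ) 1, HasSum (fun n => b n * z ^ n) (g z)) ∧
        (∃ ω : ℂ → ℂ, AnalyticOn ℂ ω (Metric.ball (0:ℂ) 1) ∧ ω 0 = 0 ∧ (∀ z ∈ Metric.ball (0:ℂ) 1, ω z ∈ Metric.ball (0:ℂ) 1) ∧
          (∀ z ∈ Metric.ball (0:ℂ) 1, z ≠ 0 → z * deriv g z / g z = (1 + (D : ℂ) * ω z) / (1 + (E : ℂ) * ω z))) ∧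
        ‖b 2 ^ 2 - b 3 ^ 2‖ = (D - E) ^ 2 * (D ^ 2 + 4 * E ^ 2 - 4 * D * E + 4) / 4) :=
  stmt_4_general D E hE hED hD
end

section
/- Let Φ be a biholomorphic function on the unit disk with Φ(0)=1, Re Φ > 0, Φ'(0) > 0, Φ''(0) ∈ ℝ, and |Φ''(0) + 2Φ'(0)^2| ≥ 2Φ'(0). If g(z) = z + b_2 z^2 + b_3 z^3 + ... satisfies z g'(z)/g(z) ≺ Φ, then |b_3| ≤ (Φ'(0)/2)|Φ''(0)/(2Φ'(0)) + Φ'(0)|. -/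
/-!
Write `ω z = c₁ z + c₂ z² + ⋯`. Comparing the Taylor coefficients of order two and three in
`z g' = g · (Φ ∘ ω)` gives `2 b₃ = Φ'(0) c₂ + (Φ''(0) / 2 + Φ'(0)²) c₁²`. The Schwarz–Pick
inequality for `ω z / z` gives `|c₂| ≤ 1 - |c₁|²`, so `2 |b₃|` is at most a convex combination of
`|Φ'(0)|` and `|Φ''(0) / 2 + Φ'(0)²|`, and the hypothesis on `Φ''(0) + 2 Φ'(0)²` says that the
second one is the larger.
-/

open Complex Metric Set Filter Topology
open scoped ComplexConjugate NNReal

namespace Complex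

theorem norm_one_sub_conj_mul_sq_sub_norm_sub_sq (a w : ℂ) :
    ‖1 - conj a * w‖ ^ 2 - ‖w - a‖ ^ 2 = (1 - ‖a‖ ^ 2) * (1 - ‖w‖ ^ 2) := by
  simp only [← normSq_eq_norm_sq, normSq_apply, sub_re, sub_im, mul_re, mul_im, conj_re, conj_im,
    one_re, one_im]
  ring

theorem norm_sub_div_one_sub_conj_mul_lt_one {a w : ℂ} (ha : ‖a‖ < 1) (hw : ‖w‖ < 1) :
    ‖(w - a) / (1 - conj a * w)‖ < 1 := by
  have hsq : ‖w - a‖ ^ 2 < ‖1 - conj a * w‖ ^ 2 := by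
    have hid := norm_one_sub_conj_mul_sq_sub_norm_sub_sq a w
    have hpos : 0 < (1 - ‖a‖ ^ 2) * (1 - ‖w‖ ^ 2) := by
      apply mul_pos <;> nlinarith [norm_nonneg a, norm_nonneg w]
    linarith
  have hlt := lt_of_pow_lt_pow_left₀ 2 (norm_nonneg _) hsq
  rw [norm_div, div_lt_one ((norm_nonneg _).trans_lt hlt)]
  exact hlt

theorem norm_deriv_le_one_sub_sq_of_mapsTo_ball {f : ℂ → ℂ} (hd : DifferentiableOn ℂ f (ball 0 1))
    (hmaps : MapsTo f (ball 0 1) (ball 0 1)) : ‖deriv f 0‖ ≤ 1 - ‖f 0‖ ^ 2 := by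
  have h0 : (0 : ℂ) ∈ ball (0 : ℂ) 1 := mem_ball_self one_pos
  set a := f 0
  have ha : ‖a‖ < 1 := mem_ball_zero_iff.1 (hmaps h0)
  have hden : ∀ z ∈ ball (0 : ℂ) 1, 1 - conj a * f z ≠ 0 := fun z hz h => by
    have : ‖conj a * f z‖ < 1 := by
      rw [norm_mul, norm_conj]
      exact mul_lt_one_of_nonneg_of_lt_one_left (norm_nonneg _) ha
        (mem_ball_zero_iff.1 (hmaps hz)).le
    rw [show conj a * f z = 1 by linear_combination -h] at this
    simp at this
  set ψ := fun z => (f z - a) / (1 - conj a * f z)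
  have hψd : DifferentiableOn ℂ ψ (ball 0 1) :=
    (hd.sub_const a).div ((hd.const_mul _).const_sub 1) hden
  have hψmaps : MapsTo ψ (ball 0 1) (closedBall (ψ 0) 1) := fun z hz => by
    simpa [ψ, a] using (norm_sub_div_one_sub_conj_mul_lt_one ha (mem_ball_zero_iff.1 (hmaps hz))).le
  have hA : (0 : ℝ) < 1 - ‖a‖ ^ 2 := by nlinarith [norm_nonneg a]
  have hψ' : deriv ψ 0 = deriv f 0 / (1 - ‖a‖ ^ 2 : ℝ) := by
    have hf := (hd.differentiableAt (isOpen_ball.mem_nhds h0)).hasDerivAt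
    have hden0 : (1 : ℂ) - conj a * a = (1 - ‖a‖ ^ 2 : ℝ) := by rw [conj_mul']; push_cast; ring
    rw [((hf.sub_const a).fun_div ((hf.const_mul (conj a)).const_sub 1) (hden 0 h0)).deriv, hden0]
    have : ((1 - ‖a‖ ^ 2 : ℝ) : ℂ) ≠ 0 := ofReal_ne_zero.2 hA.ne'
    field_simp
    ring
  have := norm_deriv_le_one_of_mapsTo_ball hψd hψmaps one_pos
  rw [hψ', norm_div, norm_real, Real.norm_of_nonneg hA.le, div_le_one hA] at this
  exact this

theorem norm_deriv_le_one_sub_sq_of_mapsTo_closedBall {f : ℂ → ℂ}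
    (hd : DifferentiableOn ℂ f (ball 0 1)) (hmaps : MapsTo f (ball 0 1) (closedBall 0 1)) :
    ‖deriv f 0‖ ≤ 1 - ‖f 0‖ ^ 2 := by
  -- apply the open-disc case to `r • f` and let `r → 1⁻`
  have hscaled : ∀ r ∈ Ico (0 : ℝ) 1, r * ‖deriv f 0‖ + r ^ 2 * ‖f 0‖ ^ 2 ≤ 1 := by
    rintro r ⟨hr0, hr1⟩
    have hrmaps : MapsTo (fun z => (r : ℂ) * f z) (ball 0 1) (ball 0 1) := fun z hz => by
      rw [mem_ball_zero_iff, norm_mul, norm_real, Real.norm_of_nonneg hr0]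
      exact mul_lt_one_of_nonneg_of_lt_one_left hr0 hr1 (mem_closedBall_zero_iff.1 (hmaps hz))
    have := norm_deriv_le_one_sub_sq_of_mapsTo_ball (hd.const_mul _) hrmaps
    rw [deriv_const_mul_field', norm_mul, norm_mul, norm_real, Real.norm_of_nonneg hr0] at this
    linarith
  have hlim : Tendsto (fun r : ℝ => r * ‖deriv f 0‖ + r ^ 2 * ‖f 0‖ ^ 2) (𝓝[<] 1)
      (𝓝 (‖deriv f 0‖ + ‖f 0‖ ^ 2)) := by
    have : Continuous fun r : ℝ => r * ‖deriv f 0‖ + r ^ 2 * ‖f 0‖ ^ 2 := by fun_prop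
    simpa using (this.tendsto 1).mono_left nhdsWithin_le_nhds
  linarith [le_of_tendsto hlim (mem_of_superset (Ico_mem_nhdsLT one_pos) hscaled)]

theorem norm_iteratedDeriv_two_le_of_mapsTo_ball {ω : ℂ → ℂ}
    (hd : DifferentiableOn ℂ ω (ball 0 1)) (hmaps : MapsTo ω (ball 0 1) (ball 0 1)) (h0 : ω 0 = 0) :
    ‖iteratedDeriv 2 ω 0‖ ≤ 2 * (1 - ‖deriv ω 0‖ ^ 2) := by
  have hnhds : ball (0 : ℂ) 1 ∈ 𝓝 0 := isOpen_ball.mem_nhds (mem_ball_self one_pos)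
  set φ := dslope ω 0
  have hφd : DifferentiableOn ℂ φ (ball 0 1) := (differentiableOn_dslope hnhds).2 hd
  have hφmaps : MapsTo φ (ball 0 1) (closedBall 0 1) := fun z hz => by
    rw [mem_closedBall_zero_iff, ← div_one (1 : ℝ)]
    exact norm_dslope_le_div_of_mapsTo_ball hd
      (by rw [h0]; exact hmaps.mono_right ball_subset_closedBall) hz
  have hω : ω = fun z => z * φ z := funext fun z => by
    simpa [h0] using (sub_smul_dslope ω 0 z).symm
  have h2 : iteratedDeriv 2 ω 0 = 2 * deriv φ 0 := by
    rw [hω, iteratedDeriv_fun_mul (f := fun z => z) contDiffAt_id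
      (hφd.analyticAt hnhds).contDiffAt]
    simp [iteratedDeriv_fun_id_zero]
  have := norm_deriv_le_one_sub_sq_of_mapsTo_closedBall hφd hφmaps
  rw [h2, norm_mul, Complex.norm_two]
  rw [show φ 0 = deriv ω 0 from dslope_same ω 0] at this
  linarith

theorem norm_mul_add_mul_sq_le_max_of_mapsTo_ball {ω : ℂ → ℂ}
    (hd : DifferentiableOn ℂ ω (ball 0 1)) (hmaps : MapsTo ω (ball 0 1) (ball 0 1)) (h0 : ω 0 = 0)
    (B K : ℂ) : ‖B * (iteratedDeriv 2 ω 0 / 2) + K * deriv ω 0 ^ 2‖ ≤ max ‖B‖ ‖K‖ := by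
  have hc₂ := norm_iteratedDeriv_two_le_of_mapsTo_ball hd hmaps h0
  have ht : 0 ≤ 1 - ‖deriv ω 0‖ ^ 2 := by linarith [norm_nonneg (iteratedDeriv 2 ω 0)]
  calc ‖B * (iteratedDeriv 2 ω 0 / 2) + K * deriv ω 0 ^ 2‖
      ≤ ‖B‖ * (1 - ‖deriv ω 0‖ ^ 2) + ‖K‖ * ‖deriv ω 0‖ ^ 2 := by
        refine (norm_add_le _ _).trans (add_le_add ?_ ?_)
        · rw [norm_mul, norm_div, Complex.norm_two]
          exact mul_le_mul_of_nonneg_left (by linarith) (norm_nonneg B)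
        · rw [norm_mul, norm_pow]
    _ ≤ max ‖B‖ ‖K‖ * (1 - ‖deriv ω 0‖ ^ 2) + max ‖B‖ ‖K‖ * ‖deriv ω 0‖ ^ 2 := by
        gcongr
        exacts [le_max_left _ _, le_max_right _ _]
    _ = max ‖B‖ ‖K‖ := by ring

end Complex

theorem FormalMultilinearSeries.hasFPowerSeriesOnBall_ofScalars_of_hasSum {g : ℂ → ℂ} {b : ℕ → ℂ}
    {r : ℝ≥0} (hr : 0 < r) (hb : ∀ z ∈ ball (0 : ℂ) r, HasSum (fun n => b n * z ^ n) (g z)) :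
    HasFPowerSeriesOnBall g (ofScalars ℂ b) 0 r := by
  refine ⟨ENNReal.le_of_forall_nnreal_lt fun s hs => ?_, by simpa using hr, fun {y} hy => ?_⟩
  · have hsum := hb s (by simpa using hs)
    refine (ofScalars ℂ b).le_radius_of_tendsto (l := 0) ?_
    simpa [ofScalars_norm] using hsum.summable.tendsto_atTop_zero.norm
  · simpa [ofScalars_apply_eq, mul_comm] using hb y (by simpa using hy)

section Coefficients

variable {𝕜 : Type*} [NontriviallyNormedField 𝕜]

theorem eventuallyEq_mul_deriv_of_div_eq {g p : 𝕜 → 𝕜} (hg : HasDerivAt g 1 0) (hg0 : g 0 = 0)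
    (h : ∀ᶠ z in 𝓝[≠] 0, z * deriv g z / g z = p z) :
    (fun z => z * deriv g z) =ᶠ[𝓝 0] fun z => g z * p z := by
  have hne := eventually_nhdsWithin_iff.1 ((hg.eventually_ne (c := 0) one_ne_zero).and h)
  filter_upwards [hne] with z hz
  rcases eq_or_ne z 0 with rfl | hz0
  · simp [hg0]
  · obtain ⟨hgz, hdiv⟩ := hz hz0
    rw [← hdiv, mul_div_cancel₀ _ hgz]

variable [CompleteSpace 𝕜]

theorem iteratedDeriv_two_comp {f h : 𝕜 → 𝕜} {x : 𝕜} (hf : AnalyticAt 𝕜 f (h x))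
    (hh : AnalyticAt 𝕜 h x) :
    iteratedDeriv 2 (f ∘ h) x =
      iteratedDeriv 2 f (h x) * deriv h x ^ 2 + deriv f (h x) * iteratedDeriv 2 h x := by
  have hderiv : deriv (f ∘ h) =ᶠ[𝓝 x] fun y => deriv f (h y) * deriv h y := by
    filter_upwards [hh.continuousAt.tendsto.eventually hf.eventually_analyticAt,
      hh.eventually_analyticAt] with y hfy hhy
    exact deriv_comp y hfy.differentiableAt hhy.differentiableAt
  have hf' : HasDerivAt (fun y => deriv f (h y)) (deriv (deriv f) (h x) * deriv h x) x :=
    hf.deriv.differentiableAt.hasDerivAt.comp x hh.differentiableAt.hasDerivAt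
  rw [iteratedDeriv_succ, iteratedDeriv_one, hderiv.deriv_eq,
    (hf'.fun_mul hh.deriv.differentiableAt.hasDerivAt).deriv]
  simp only [iteratedDeriv_succ, iteratedDeriv_zero]
  ring

theorem two_mul_iteratedDeriv_three_of_mul_deriv_eq {g p : 𝕜 → 𝕜} (hg : AnalyticAt 𝕜 g 0)
    (hp : AnalyticAt 𝕜 p 0) (hg0 : g 0 = 0) (hg1 : deriv g 0 = 1) (hp0 : p 0 = 1)
    (h : (fun z => z * deriv g z) =ᶠ[𝓝 0] fun z => g z * p z) :
    2 * iteratedDeriv 3 g 0 = 6 * deriv p 0 ^ 2 + 3 * iteratedDeriv 2 p 0 := by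
  have expand (n : ℕ) := h.iteratedDeriv_eq n
  simp only [iteratedDeriv_fun_mul (f := fun z => z) contDiffAt_id hg.deriv.contDiffAt,
    iteratedDeriv_fun_mul hg.contDiffAt hp.contDiffAt] at expand
  have e2 := expand 2
  have e3 := expand 3
  simp [Finset.sum_range_succ, iteratedDeriv_fun_id_zero, ← iteratedDeriv_succ', hg0, hg1,
    hp0] at e2 e3
  linear_combination e3 + 3 * deriv p 0 * e2

theorem HasFPowerSeriesAt.iteratedDeriv_eq_factorial_mul [CharZero 𝕜] {g : 𝕜 → 𝕜} {b : ℕ → 𝕜}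
    {x : 𝕜} (hg : HasFPowerSeriesAt g (FormalMultilinearSeries.ofScalars 𝕜 b) x) (n : ℕ) :
    iteratedDeriv n g x = n.factorial * b n := by
  have := congrArg (·.coeff n) (hg.analyticAt.hasFPowerSeriesAt.eq_formalMultilinearSeries hg)
  simp only [FormalMultilinearSeries.coeff_ofScalars] at this
  rw [← this, mul_div_cancel₀ _ (Nat.cast_ne_zero.2 n.factorial_ne_zero)]

end Coefficients

theorem norm_coeff_three_le_of_mul_deriv_div_eq_comp {Φ ω g : ℂ → ℂ} {b : ℕ → ℂ}
    (hΦ : AnalyticAt ℂ Φ 0) (hΦ0 : Φ 0 = 1) (hωd : DifferentiableOn ℂ ω (ball 0 1))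
    (hωmaps : MapsTo ω (ball 0 1) (ball 0 1)) (hω0 : ω 0 = 0) (hb0 : b 0 = 0) (hb1 : b 1 = 1)
    (hb : ∀ z ∈ ball (0 : ℂ) 1, HasSum (fun n => b n * z ^ n) (g z))
    (hquot : ∀ z ∈ ball (0 : ℂ) 1, z ≠ 0 → z * deriv g z / g z = Φ (ω z)) :
    2 * ‖b 3‖ ≤ max ‖deriv Φ 0‖ ‖(iteratedDeriv 2 Φ 0 + 2 * deriv Φ 0 ^ 2) / 2‖ := by
  have hnhds : ball (0 : ℂ) 1 ∈ 𝓝 0 := isOpen_ball.mem_nhds (mem_ball_self one_pos)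
  have hg := (FormalMultilinearSeries.hasFPowerSeriesOnBall_ofScalars_of_hasSum one_pos
    (by simpa using hb)).hasFPowerSeriesAt
  have hg0 : g 0 = 0 := by simpa [hb0] using hg.iteratedDeriv_eq_factorial_mul 0
  have hg1 : deriv g 0 = 1 := by simpa [hb1] using hg.iteratedDeriv_eq_factorial_mul 1
  have hΦω : AnalyticAt ℂ Φ (ω 0) := by rwa [hω0]
  have hω : AnalyticAt ℂ ω 0 := hωd.analyticAt hnhds
  have hmul := eventuallyEq_mul_deriv_of_div_eq (hg1 ▸ hg.analyticAt.differentiableAt.hasDerivAt)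
    hg0 (by filter_upwards [nhdsWithin_le_nhds hnhds, self_mem_nhdsWithin] with z hz hz0
      using hquot z hz hz0)
  have hrel := two_mul_iteratedDeriv_three_of_mul_deriv_eq hg.analyticAt (hΦω.comp hω) hg0 hg1
    (by simp [hω0, hΦ0]) hmul
  rw [hg.iteratedDeriv_eq_factorial_mul, deriv_comp _ hΦω.differentiableAt hω.differentiableAt,
    iteratedDeriv_two_comp hΦω hω, hω0] at hrel
  have h2b3 : 2 * b 3 = deriv Φ 0 * (iteratedDeriv 2 ω 0 / 2) +
      (iteratedDeriv 2 Φ 0 + 2 * deriv Φ 0 ^ 2) / 2 * deriv ω 0 ^ 2 := by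
    norm_num [Nat.factorial] at hrel
    linear_combination hrel / 6
  rw [← Complex.norm_two, ← norm_mul, h2b3]
  exact Complex.norm_mul_add_mul_sq_le_max_of_mapsTo_ball hωd hωmaps hω0
    (deriv Φ 0) ((iteratedDeriv 2 Φ 0 + 2 * deriv Φ 0 ^ 2) / 2)

theorem stmt_10_general (Φ : ℂ → ℂ)
    (hΦa : AnalyticOn ℂ Φ (Metric.ball (0:ℂ) 1)) (hΦ0 : Φ 0 = 1) (hd1re : 0 < (deriv Φ 0).re) (hd1im : (deriv Φ 0).im = 0)
    (hd2im : (iteratedDeriv 2 Φ 0).im = 0)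
    (hcond : 2 * (deriv Φ 0).re ≤ ‖iteratedDeriv 2 Φ 0 + 2 * (deriv Φ 0) ^ 2‖)
    (g : ℂ → ℂ) (b : ℕ → ℂ)
    (hb0 : b 0 = 0) (hb1 : b 1 = 1)
    (hb : ∀ z ∈ Metric.ball (0:ℂ) 1, HasSum (fun n => b n * z ^ n) (g z))
    (hsub : (∃ ω : ℂ → ℂ, AnalyticOn ℂ ω (Metric.ball (0:ℂ) 1) ∧ ω 0 = 0 ∧ (∀ z ∈ Metric.ball (0:ℂ) 1, ω z ∈ Metric.ball (0:ℂ) 1) ∧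
          (∀ z ∈ Metric.ball (0:ℂ) 1, z ≠ 0 → z * deriv g z / g z = Φ (ω z)))) :
    ‖b 3‖ ≤ (deriv Φ 0).re / 2 * |(iteratedDeriv 2 Φ 0).re / (2 * (deriv Φ 0).re) + (deriv Φ 0).re| := by
  obtain ⟨ω, hωa, hω0, hωmaps, hquot⟩ := hsub
  have hbound := norm_coeff_three_le_of_mul_deriv_div_eq_comp
    (hΦa.analyticAt (isOpen_ball.mem_nhds (mem_ball_self one_pos))) hΦ0 hωa.differentiableOn
    hωmaps hω0 hb0 hb1 hb hquot
  set x := (deriv Φ 0).re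
  set y := (iteratedDeriv 2 Φ 0).re
  have hx : deriv Φ 0 = x := Complex.ext (by simp [x]) (by simp [hd1im])
  have hK : ‖iteratedDeriv 2 Φ 0 + 2 * deriv Φ 0 ^ 2‖ = |y + 2 * x ^ 2| := by
    rw [hx, show iteratedDeriv 2 Φ 0 = y from Complex.ext (by simp [y]) (by simp [hd2im])]
    exact_mod_cast norm_real _
  have hrhs : x / 2 * |y / (2 * x) + x| = |y + 2 * x ^ 2| / 4 := by
    rw [show y / (2 * x) + x = (y + 2 * x ^ 2) / (2 * x) by field_simp, abs_div,
      abs_of_pos (by linarith : (0 : ℝ) < 2 * x)]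
    field_simp
    ring
  rw [norm_div, Complex.norm_two, hK, hx, norm_real, Real.norm_of_nonneg hd1re.le,
    max_eq_right (by linarith)] at hbound
  rw [hrhs]
  linarith

theorem stmt_10 (Φ : ℂ → ℂ)
    (hΦa : AnalyticOn ℂ Φ (Metric.ball (0:ℂ) 1)) (hΦi : Set.InjOn Φ (Metric.ball (0:ℂ) 1)) (hΦ0 : Φ 0 = 1) (hΦre : ∀ z ∈ Metric.ball (0:ℂ) 1, 0 < (Φ z).re) (hd1re : 0 < (deriv Φ 0).re) (hd1im : (deriv Φ 0).im = 0)
    (hd2im : (iteratedDeriv 2 Φ 0).im = 0)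
    (hcond : 2 * (deriv Φ 0).re ≤ ‖iteratedDeriv 2 Φ 0 + 2 * (deriv Φ 0) ^ 2‖)
    (g : ℂ → ℂ) (b : ℕ → ℂ)
    (hb0 : b 0 = 0) (hb1 : b 1 = 1)
    (hb : ∀ z ∈ Metric.ball (0:ℂ) 1, HasSum (fun n => b n * z ^ n) (g z))
    (hsub : (∃ ω : ℂ → ℂ, AnalyticOn ℂ ω (Metric.ball (0:ℂ) 1) ∧ ω 0 = 0 ∧ (∀ z ∈ Metric.ball (0:ℂ) 1, ω z ∈ Metric.ball (0:ℂ) 1) ∧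
          (∀ z ∈ Metric.ball (0:ℂ) 1, z ≠ 0 → z * deriv g z / g z = Φ (ω z)))) :
    ‖b 3‖ ≤ (deriv Φ 0).re / 2 * |(iteratedDeriv 2 Φ 0).re / (2 * (deriv Φ 0).re) + (deriv Φ 0).re| :=
  stmt_10_general Φ hΦa hΦ0 hd1re hd1im hd2im hcond g b hb0 hb1 hb hsub
end
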